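/- Every α-block-diagonally-dominant Hermitian matrix M can be written as M = X + L where X is block-diagonal, L is block diagonally dominant, and X ⪰ (α/2)·L. -/

import Mathlib

open Matrix Finset
open scoped ComplexOrder

/-- The `ℓ²` operator norm of a square complex matrix. -/
noncomputable def matOpNorm {r : ℕ} (A : Matrix (Fin r) (Fin r) ℂ) : ℝ :=
  ‖(Matrix.toEuclideanCLM (𝕜 := ℂ) A : EuclideanSpace ℂ (Fin r) →L[ℂ] EuclideanSpace ℂ (Fin r))‖

/-- A Hermitian block matrix (given by its `r × r` blocks) is block diagonally dominant
if for every `i`, `M i i ⪰ (∑_{j ≠ i} ‖M i j‖) · I`. -/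
def IsBDD {n r : ℕ} (M : Fin n → Fin n → Matrix (Fin r) (Fin r) ℂ) : Prop :=
  ∀ i, (M i i - (∑ j ∈ Finset.univ.erase i, matOpNorm (M i j)) •
      (1 : Matrix (Fin r) (Fin r) ℂ)).PosSemidef

/-- Flatten a block matrix into an ordinary matrix. -/
def flatten {n r : ℕ} (M : Fin n → Fin n → Matrix (Fin r) (Fin r) ℂ) :
    Matrix (Fin n × Fin r) (Fin n × Fin r) ℂ :=
  Matrix.of fun p q => M p.1 q.1 p.2 q.2

/-! With `s i = ∑_{j ≠ i} ‖M i j‖`, let `L` be `M` with its diagonal blocks replaced by `s i • 1`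
and `X = M - L`, which is block diagonal. `L` is bDD with equality, and `X - (α/2) L` has
off-diagonal blocks `-(α/2) M i j` and diagonal blocks `M i i - (1 + α/2) s i • 1`, so it is bDD
precisely because `M` is `α`-bDD. It remains to see that a Hermitian bDD block matrix is positive
semidefinite: bound the off-diagonal terms of its quadratic form by
`|⟪v i, M i j v j⟫| ≤ ‖M i j‖ ‖v i‖ ‖v j‖` and use `2ab ≤ a² + b²`. -/

section OperatorNorm

variable {r : ℕ}

lemma matOpNorm_conjTranspose (A : Matrix (Fin r) (Fin r) ℂ) : matOpNorm Aᴴ = matOpNorm A := by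
  rw [matOpNorm, matOpNorm, ← star_eq_conjTranspose, map_star]
  exact norm_star (E := EuclideanSpace ℂ (Fin r) →L[ℂ] EuclideanSpace ℂ (Fin r)) _

lemma matOpNorm_real_smul (c : ℝ) (A : Matrix (Fin r) (Fin r) ℂ) :
    matOpNorm (c • A) = |c| * matOpNorm A := by
  rw [matOpNorm, matOpNorm, ← Complex.coe_smul, map_smul, norm_smul, Complex.norm_real,
    Real.norm_eq_abs]

lemma star_dotProduct_mulVec_eq_inner (A : Matrix (Fin r) (Fin r) ℂ) (v w : Fin r → ℂ) :
    star v ⬝ᵥ (A *ᵥ w) =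
      inner ℂ (WithLp.toLp 2 v) (toEuclideanCLM (𝕜 := ℂ) A (WithLp.toLp 2 w)) := by
  rw [EuclideanSpace.inner_eq_star_dotProduct, toEuclideanCLM_toLp, dotProduct_comm]

lemma norm_star_dotProduct_mulVec_le (A : Matrix (Fin r) (Fin r) ℂ) (v w : Fin r → ℂ) :
    ‖star v ⬝ᵥ (A *ᵥ w)‖ ≤ matOpNorm A * ‖WithLp.toLp 2 v‖ * ‖WithLp.toLp 2 w‖ :=
  calc ‖star v ⬝ᵥ (A *ᵥ w)‖
      ≤ ‖WithLp.toLp 2 v‖ * ‖toEuclideanCLM (𝕜 := ℂ) A (WithLp.toLp 2 w)‖ := by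
        rw [star_dotProduct_mulVec_eq_inner]
        exact norm_inner_le_norm _ _
    _ ≤ ‖WithLp.toLp 2 v‖ * (matOpNorm A * ‖WithLp.toLp 2 w‖) := by
        gcongr
        exact ContinuousLinearMap.le_opNorm _ _
    _ = matOpNorm A * ‖WithLp.toLp 2 v‖ * ‖WithLp.toLp 2 w‖ := by ring

lemma Matrix.PosSemidef.mul_norm_sq_le_re_star_dotProduct_mulVec {A : Matrix (Fin r) (Fin r) ℂ}
    {s : ℝ} (h : (A - s • (1 : Matrix (Fin r) (Fin r) ℂ)).PosSemidef) (v : Fin r → ℂ) :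
    s * ‖WithLp.toLp 2 v‖ ^ 2 ≤ (star v ⬝ᵥ (A *ᵥ v)).re := by
  have hv : star v ⬝ᵥ v = (‖WithLp.toLp 2 v‖ : ℂ) ^ 2 := by
    have := inner_self_eq_norm_sq_to_K (𝕜 := ℂ) (WithLp.toLp 2 v)
    rwa [EuclideanSpace.inner_eq_star_dotProduct, dotProduct_comm] at this
  have := h.re_dotProduct_nonneg v
  rw [sub_mulVec, dotProduct_sub, smul_mulVec, one_mulVec, dotProduct_smul, hv,
    ← Complex.ofReal_pow] at this
  simpa only [RCLike.re_to_complex, Complex.sub_re, Complex.smul_re, Complex.ofReal_re, smul_eq_mul,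
    sub_nonneg] using this

end OperatorNorm

theorem sum_sum_erase_mul_mul_le {ι : Type*} [Fintype ι] [DecidableEq ι] {N : ι → ι → ℝ}
    (hN_symm : ∀ i j, N i j = N j i) (hN_nonneg : ∀ i j, 0 ≤ N i j) (x : ι → ℝ) :
    ∑ i, ∑ j ∈ univ.erase i, N i j * x i * x j ≤
      ∑ i, (∑ j ∈ univ.erase i, N i j) * x i ^ 2 := by
  have hswap : ∑ i, ∑ j ∈ univ.erase i, N i j * x j ^ 2 =
      ∑ i, ∑ j ∈ univ.erase i, N i j * x i ^ 2 := by
    rw [sum_comm' (t' := univ) (s' := fun j => univ.erase j) (by simp [ne_comm])]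
    exact sum_congr rfl fun i _ => sum_congr rfl fun j _ => by rw [hN_symm]
  calc ∑ i, ∑ j ∈ univ.erase i, N i j * x i * x j
      ≤ ∑ i, ∑ j ∈ univ.erase i, (N i j * x i ^ 2 + N i j * x j ^ 2) / 2 := by
        gcongr with i _ j _
        nlinarith [mul_nonneg (hN_nonneg i j) (sq_nonneg (x i - x j))]
    _ = ∑ i, (∑ j ∈ univ.erase i, N i j) * x i ^ 2 := by
        simp_rw [add_div, sum_add_distrib, ← sum_div, hswap, sum_mul]
        ring

section BlockMatrix

variable {n r : ℕ}

lemma flatten_isHermitian {B : Fin n → Fin n → Matrix (Fin r) (Fin r) ℂ}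
    (hB : ∀ i j, (B i j)ᴴ = B j i) : (flatten B).IsHermitian := by
  ext p q
  simpa [flatten, conjTranspose_apply] using congrFun (congrFun (hB q.1 p.1) p.2) q.2

lemma flatten_sub_smul (X L : Fin n → Fin n → Matrix (Fin r) (Fin r) ℂ) (c : ℝ) :
    flatten X - c • flatten L = flatten fun i j => X i j - c • L i j := by
  ext p q
  simp [flatten]

lemma star_dotProduct_flatten_mulVec (B : Fin n → Fin n → Matrix (Fin r) (Fin r) ℂ)
    (x : Fin n × Fin r → ℂ) :
    star x ⬝ᵥ (flatten B *ᵥ x) =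
      ∑ i, ∑ j, star (Function.curry x i) ⬝ᵥ (B i j *ᵥ Function.curry x j) := by
  simp only [dotProduct, mulVec, flatten, of_apply, Fintype.sum_prod_type, mul_sum,
    Pi.star_apply, Function.curry_apply]
  exact sum_congr rfl fun i _ => sum_comm

theorem IsBDD.posSemidef_flatten {B : Fin n → Fin n → Matrix (Fin r) (Fin r) ℂ}
    (hH : ∀ i j, (B i j)ᴴ = B j i) (hB : IsBDD B) : (flatten B).PosSemidef := by
  refine PosSemidef.of_dotProduct_mulVec_nonneg (flatten_isHermitian hH) fun x => ?_
  set T : Fin n → Fin n → ℂ :=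
    fun i j => star (Function.curry x i) ⬝ᵥ (B i j *ᵥ Function.curry x j)
  set u : Fin n → ℝ := fun i => ‖WithLp.toLp 2 (Function.curry x i)‖
  set N : Fin n → Fin n → ℝ := fun i j => matOpNorm (B i j)
  have hdiag (i : Fin n) : (∑ j ∈ univ.erase i, N i j) * u i ^ 2 ≤ (T i i).re :=
    (hB i).mul_norm_sq_le_re_star_dotProduct_mulVec _
  have hoff (i j : Fin n) : -(N i j * u i * u j) ≤ (T i j).re :=
    neg_le_of_abs_le ((Complex.abs_re_le_norm _).trans (norm_star_dotProduct_mulVec_le _ _ _))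
  have hN_symm (i j : Fin n) : N i j = N j i := by
    simp only [N, ← hH j i, matOpNorm_conjTranspose]
  have hre : 0 ≤ (star x ⬝ᵥ (flatten B *ᵥ x)).re :=
    calc 0 ≤ ∑ i, (∑ j ∈ univ.erase i, N i j) * u i ^ 2 -
          ∑ i, ∑ j ∈ univ.erase i, N i j * u i * u j :=
          sub_nonneg.2 (sum_sum_erase_mul_mul_le hN_symm (fun _ _ => norm_nonneg _) u)
      _ ≤ ∑ i, ((T i i).re + ∑ j ∈ univ.erase i, (T i j).re) := by
          rw [sub_eq_add_neg, ← sum_neg_distrib, ← sum_add_distrib]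
          refine sum_le_sum fun i _ => ?_
          rw [← sum_neg_distrib]
          exact add_le_add (hdiag i) (sum_le_sum fun j _ => hoff i j)
      _ = (star x ⬝ᵥ (flatten B *ᵥ x)).re := by
          rw [star_dotProduct_flatten_mulVec, Complex.re_sum]
          exact sum_congr rfl fun i _ => by
            rw [Complex.re_sum]
            exact add_sum_erase _ (fun j => (T i j).re) (mem_univ i)
  exact Complex.nonneg_iff.2
    ⟨hre, ((flatten_isHermitian hH).im_star_dotProduct_mulVec_self x).symm⟩

end BlockMatrix

section Splitting

variable {n r : ℕ} (M : Fin n → Fin n → Matrix (Fin r) (Fin r) ℂ)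

noncomputable def offDiagNormSum (i : Fin n) : ℝ := ∑ j ∈ univ.erase i, matOpNorm (M i j)

noncomputable def bddPart (i j : Fin n) : Matrix (Fin r) (Fin r) ℂ :=
  if i = j then offDiagNormSum M i • 1 else M i j

noncomputable def diagRemainder (i j : Fin n) : Matrix (Fin r) (Fin r) ℂ :=
  if i = j then M i i - offDiagNormSum M i • 1 else 0

lemma diagRemainder_of_ne {i j : Fin n} (h : i ≠ j) : diagRemainder M i j = 0 := if_neg h

lemma diagRemainder_add_bddPart (i j : Fin n) : diagRemainder M i j + bddPart M i j = M i j := by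
  unfold diagRemainder bddPart
  split_ifs with h
  · subst h; exact sub_add_cancel _ _
  · exact zero_add _

lemma isBDD_bddPart : IsBDD (bddPart M) := by
  intro i
  have hsum : ∑ j ∈ univ.erase i, matOpNorm (bddPart M i j) = offDiagNormSum M i :=
    sum_congr rfl fun j hj => by rw [bddPart, if_neg (ne_of_mem_erase hj).symm]
  rw [hsum, bddPart, if_pos rfl, sub_self]
  exact PosSemidef.zero

variable {M}

lemma conjTranspose_diagRemainder_sub_smul_bddPart (hM : ∀ i j, (M i j)ᴴ = M j i) (c : ℝ)
    (i j : Fin n) : (diagRemainder M i j - c • bddPart M i j)ᴴ =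
      diagRemainder M j i - c • bddPart M j i := by
  by_cases h : i = j
  · subst h
    simp [diagRemainder, bddPart, hM]
  · simp [diagRemainder, bddPart, h, Ne.symm h, hM]

lemma isBDD_diagRemainder_sub_smul_bddPart {c : ℝ} (hc : 0 ≤ c)
    (hM : ∀ i, (M i i - ((1 + 2 * c) * offDiagNormSum M i) •
      (1 : Matrix (Fin r) (Fin r) ℂ)).PosSemidef) :
    IsBDD fun i j => diagRemainder M i j - c • bddPart M i j := by
  intro i
  have hsum : ∑ j ∈ univ.erase i, matOpNorm (diagRemainder M i j - c • bddPart M i j) =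
      c * offDiagNormSum M i := by
    rw [offDiagNormSum, mul_sum]
    refine sum_congr rfl fun j hj => ?_
    have hij := (ne_of_mem_erase hj).symm
    rw [diagRemainder_of_ne M hij, bddPart, if_neg hij, zero_sub, ← neg_smul, matOpNorm_real_smul,
      abs_neg, abs_of_nonneg hc]
  convert hM i using 1
  rw [hsum]
  simp only [diagRemainder, bddPart, ↓reduceIte]
  module

end Splitting

/-- Every `α`-bDD Hermitian block matrix `M` can be written as `M = X + L` with `X`
block diagonal, `L` bDD, and `X ⪰ (α/2) L`. -/
theorem stmt_10 {n r : ℕ} (α : ℝ) (hα : 0 ≤ α)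
    (M : Fin n → Fin n → Matrix (Fin r) (Fin r) ℂ)
    (hHerm : ∀ i j, (M i j)ᴴ = M j i)
    (habdd : ∀ i, (M i i - ((1 + α) * ∑ j ∈ Finset.univ.erase i, matOpNorm (M i j)) •
        (1 : Matrix (Fin r) (Fin r) ℂ)).PosSemidef) :
    ∃ X L : Fin n → Fin n → Matrix (Fin r) (Fin r) ℂ,
      (∀ i j, i ≠ j → X i j = 0) ∧
      (∀ i j, M i j = X i j + L i j) ∧
      IsBDD L ∧
      (flatten X - (α / 2 : ℝ) • flatten L).PosSemidef := by
  refine ⟨diagRemainder M, bddPart M, fun i j => diagRemainder_of_ne M,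
    fun i j => (diagRemainder_add_bddPart M i j).symm, isBDD_bddPart M, ?_⟩
  have hdom : ∀ i, (M i i - ((1 + 2 * (α / 2)) * offDiagNormSum M i) •
      (1 : Matrix (Fin r) (Fin r) ℂ)).PosSemidef := by
    simpa only [offDiagNormSum, mul_div_cancel₀ α two_ne_zero] using habdd
  rw [flatten_sub_smul]
  exact IsBDD.posSemidef_flatten (conjTranspose_diagRemainder_sub_smul_bddPart hHerm _)
    (isBDD_diagRemainder_sub_smul_bddPart (by positivity) hdom)
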